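/- arXiv:1006.1575 — 2 statements merged into one kernel-verified Lean document; each statement's English description precedes it below -/
import Mathlib

section
/- Let K : ℝ → ℝ be a continuous even kernel with K(0) = 1 and characteristic exponent s, meaning k_s := lim_{x→0} (1 - K(x))/|x|^s exists and is nonzero. Let C : ℝ → ℝ satisfy that g_s(t) := sup_{|u| ≥ |t|} |u|^s |C(u)| is integrable, and let β_n → 0 with β_n > 0. Then (1/(2π)) ∫_ℝ (K(β_n t) - 1) C(t) e^{-itλ} dt = -k_s (β_n)^s (1/(2π)) ∫_ℝ |t|^s C(t) e^{-itλ} dt + o((β_n)^s), uniformly in λ. -/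
open Filter MeasureTheory Real Complex Topology

/-!
Write `(1 - K x) / |x| ^ s = ks + R x` with `R x → 0` as `x → 0`. Then
`(K (β t) - 1) C t + ks β^s |t|^s C t = -β^s R (β t) |t|^s C t`, so the error term is at most
`β^s ∫ |R (β t)| |t|^s |C t| dt`. The limit of `R` at `0` and the boundedness of `K` away from `0`
bound `R` uniformly on `x ≠ 0`, and dominated convergence by `|t|^s |C t|` shows that this last
integral tends to `0`. The bound does not depend on `λ` because `|e^{-itλ}| = 1`.
-/

lemma norm_ofReal_mul_exp_neg_mul_I (a t l : ℝ) :
    ‖(a : ℂ) * exp (-(t * l) * I)‖ = |a| := by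
  rw [norm_mul, norm_real, show -((t : ℂ) * l) = ((-(t * l) : ℝ) : ℂ) by push_cast; ring,
    norm_exp_ofReal_mul_I, mul_one, Real.norm_eq_abs]

lemma MeasureTheory.Integrable.ofReal_mul_exp_neg_mul_I {f : ℝ → ℝ} (hf : Integrable f) (l : ℝ) :
    Integrable (fun t : ℝ => (f t : ℂ) * exp (-(t * l) * I)) :=
  Integrable.mono' hf.norm
    ((continuous_ofReal.comp_aestronglyMeasurable hf.1).mul (by fun_prop))
    (ae_of_all _ fun t => (norm_ofReal_mul_exp_neg_mul_I (f t) t l).le)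

lemma norm_integral_ofReal_mul_exp_neg_mul_I_le (f : ℝ → ℝ) (l : ℝ) :
    ‖∫ t : ℝ, (f t : ℂ) * exp (-(t * l) * I)‖ ≤ ∫ t, |f t| :=
  (norm_integral_le_integral_norm _).trans_eq
    (integral_congr_ae (ae_of_all _ fun t => norm_ofReal_mul_exp_neg_mul_I (f t) t l))

lemma integral_ofReal_mul_exp_neg_mul_I_add {f g : ℝ → ℝ} (hf : Integrable f) (hg : Integrable g)
    (c l : ℝ) :
    (∫ t : ℝ, (f t : ℂ) * exp (-(t * l) * I)) + (c : ℂ) * ∫ t : ℝ, (g t : ℂ) * exp (-(t * l) * I) =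
      ∫ t : ℝ, ((f t + c * g t : ℝ) : ℂ) * exp (-(t * l) * I) := by
  rw [← integral_const_mul, ← integral_add (hf.ofReal_mul_exp_neg_mul_I l)
    ((hg.ofReal_mul_exp_neg_mul_I l).const_mul _)]
  congr 1 with t
  push_cast
  ring

noncomputable def charRemainder (K : ℝ → ℝ) (s ks x : ℝ) : ℝ := (1 - K x) / |x| ^ s - ks

section Kernel

variable {K : ℝ → ℝ} {s ks : ℝ}

lemma exists_abs_charRemainder_le {M : ℝ} (hM : ∀ x, |K x| ≤ M) (hs : 0 ≤ s)
    (hk : Tendsto (fun x => (1 - K x) / |x| ^ s) (𝓝[≠] 0) (𝓝 ks)) :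
    ∃ B, ∀ x ≠ 0, |charRemainder K s ks x| ≤ B := by
  obtain ⟨δ, hδ, hnear⟩ := Metric.mem_nhdsWithin_iff.mp
    ((hk.sub_const ks).abs.eventually_lt_const (show |ks - ks| < 1 by simp))
  refine ⟨max 1 ((1 + M) / δ ^ s + |ks|), fun x hx => ?_⟩
  rcases lt_or_ge |x| δ with hxδ | hxδ
  · exact (hnear ⟨by simpa [Real.dist_eq] using hxδ, hx⟩).le.trans (le_max_left _ _)
  · have hquot : |(1 - K x) / |x| ^ s| ≤ (1 + M) / δ ^ s := by
      rw [abs_div, abs_of_pos (rpow_pos_of_pos (abs_pos.mpr hx) s)]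
      have h1 : |1 - K x| ≤ 1 + M := (abs_sub _ _).trans (by simpa using hM x)
      exact div_le_div₀ (by linarith [abs_nonneg (K x), hM x]) h1 (rpow_pos_of_pos hδ s)
        (rpow_le_rpow hδ.le hxδ hs)
    exact ((abs_sub _ _).trans (by linarith)).trans (le_max_right _ _)

lemma sub_one_add_mul_rpow_eq {b t : ℝ} (hb : 0 < b) (ht : t ≠ 0) :
    K (b * t) - 1 + ks * b ^ s * |t| ^ s = -(b ^ s * |t| ^ s * charRemainder K s ks (b * t)) := by
  have hbt : |b * t| ^ s = b ^ s * |t| ^ s := by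
    rw [abs_mul, abs_of_pos hb, mul_rpow hb.le (abs_nonneg t)]
  have hne : |b * t| ^ s ≠ 0 := (rpow_pos_of_pos (abs_pos.mpr (mul_ne_zero hb.ne' ht)) s).ne'
  rw [hbt] at hne
  rw [charRemainder, hbt]
  field_simp
  ring

lemma tendsto_integral_abs_charRemainder_mul {ι : Type*} {l : Filter ι} [l.IsCountablyGenerated]
    {C : ℝ → ℝ} {β : ι → ℝ} {B : ℝ} (hK : Measurable K)
    (hB : ∀ x ≠ 0, |charRemainder K s ks x| ≤ B)
    (hk : Tendsto (fun x => (1 - K x) / |x| ^ s) (𝓝[≠] 0) (𝓝 ks))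
    (hCs : Integrable (fun t => |t| ^ s * C t)) (hβ : ∀ i, β i ≠ 0) (hβ0 : Tendsto β l (𝓝 0)) :
    Tendsto (fun i => ∫ t, |charRemainder K s ks (β i * t)| * |(|t| ^ s * C t)|) l (𝓝 0) := by
  have hR : Measurable (charRemainder K s ks) :=
    ((measurable_const.sub hK).div (measurable_id.abs.pow_const s)).sub measurable_const
  have hR0 : Tendsto (charRemainder K s ks) (𝓝[≠] 0) (𝓝 0) := by
    have h := hk.sub_const ks
    rwa [sub_self] at h
  have hae : ∀ᵐ t : ℝ, t ≠ 0 := ae_iff.mpr (by simp)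
  simpa using tendsto_integral_filter_of_dominated_convergence (f := fun _ => 0)
    (fun t => B * |(|t| ^ s * C t)|)
    (Eventually.of_forall fun i =>
      ((hR.comp (measurable_const_mul (β i))).abs.aestronglyMeasurable).mul hCs.1.norm)
    (Eventually.of_forall fun i => hae.mono fun t ht => by
      rw [Real.norm_eq_abs, abs_of_nonneg (mul_nonneg (abs_nonneg _) (abs_nonneg _))]
      exact mul_le_mul_of_nonneg_right (hB _ (mul_ne_zero (hβ i) ht)) (abs_nonneg _))
    (hCs.norm.const_mul B)
    (by
      filter_upwards [hae] with t ht
      have hβt : Tendsto (fun i => β i * t) l (𝓝[≠] 0) := tendsto_nhdsWithin_iff.mpr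
        ⟨by simpa using hβ0.mul_const t, Eventually.of_forall fun i => mul_ne_zero (hβ i) ht⟩
      simpa using (hR0.comp hβt).abs.mul_const |(|t| ^ s * C t)|)

lemma norm_fourier_kernel_sub_one_add_le {C : ℝ → ℝ} {M b : ℝ} (hK : Continuous K)
    (hM : ∀ x, |K x| ≤ M) (hC : Integrable C) (hCs : Integrable (fun t => |t| ^ s * C t))
    (hb : 0 < b) (l : ℝ) :
    ‖((1 / (2 * π)) * (∫ t : ℝ, ((K (b * t) - 1 : ℝ) : ℂ) * (C t : ℂ) * exp (-(t * l) * I)) +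
        (ks : ℂ) * (b ^ s : ℝ) *
          ((1 / (2 * π)) * ∫ t : ℝ, ((|t| ^ s * C t : ℝ) : ℂ) * exp (-(t * l) * I)))‖ ≤
      b ^ s * ∫ t, |charRemainder K s ks (b * t)| * |(|t| ^ s * C t)| := by
  set g : ℝ → ℝ := fun t => (K (b * t) - 1) * C t + ks * b ^ s * (|t| ^ s * C t)
  have hKC : Integrable fun t => (K (b * t) - 1) * C t :=
    hC.bdd_mul (c := M + 1)
      (by fun_prop : Continuous fun t => K (b * t) - 1).aestronglyMeasurable
      (ae_of_all _ fun t => (abs_sub _ _).trans (by simpa using hM (b * t)))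
  have hg : ∀ᵐ t : ℝ, |g t| = b ^ s * (|charRemainder K s ks (b * t)| * |(|t| ^ s * C t)|) := by
    refine (ae_iff.mpr (by simp) : ∀ᵐ t : ℝ, t ≠ 0).mono fun t ht => ?_
    rw [show g t = (K (b * t) - 1 + ks * b ^ s * |t| ^ s) * C t by simp only [g]; ring,
      sub_one_add_mul_rpow_eq hb ht]
    simp only [abs_neg, abs_mul, abs_of_pos (rpow_pos_of_pos hb s),
      abs_of_nonneg (rpow_nonneg (abs_nonneg t) s)]
    ring
  calc _ = ‖((1 / (2 * π) : ℝ) : ℂ) * ∫ t : ℝ, (g t : ℂ) * exp (-(t * l) * I)‖ := by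
        rw [← integral_ofReal_mul_exp_neg_mul_I_add hKC hCs]
        congr 1
        push_cast
        ring
    _ = 1 / (2 * π) * ‖∫ t : ℝ, (g t : ℂ) * exp (-(t * l) * I)‖ := by
        rw [norm_mul, norm_real, Real.norm_of_nonneg (by positivity)]
    _ ≤ 1 * ∫ t, |g t| := by
        gcongr
        · exact (div_le_one (by positivity)).mpr (by linarith [pi_gt_three])
        · exact norm_integral_ofReal_mul_exp_neg_mul_I_le g l
    _ = b ^ s * ∫ t, |charRemainder K s ks (b * t)| * |(|t| ^ s * C t)| := by
        rw [one_mul, ← integral_const_mul]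
        exact integral_congr_ae hg

end Kernel

theorem stmt_11_general (K : ℝ → ℝ) (hK_cont : Continuous K)
    (hK_bdd : ∃ M : ℝ, ∀ x, |K x| ≤ M)
    (s ks : ℝ) (hs : 0 < s)
    (hk : Tendsto (fun x : ℝ => (1 - K x) / |x| ^ s) (nhdsWithin 0 {0}ᶜ) (nhds ks))
    (C : ℝ → ℝ) (hC_int : Integrable C)
    (hCs_int : Integrable (fun t : ℝ => |t| ^ s * C t))
    (β : ℕ → ℝ) (hβ_pos : ∀ n, 0 < β n) (hβ0 : Tendsto β atTop (nhds 0)) :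
    ∀ ε > (0 : ℝ), ∀ᶠ n : ℕ in atTop, ∀ l : ℝ,
      ‖((1 / (2 * π)) * (∫ t : ℝ, ((K (β n * t) - 1 : ℝ) : ℂ) * (C t : ℂ) *
            Complex.exp (-(t * l) * Complex.I)) +
          (ks : ℂ) * (β n ^ s : ℝ) *
            ((1 / (2 * π)) * ∫ t : ℝ, ((|t| ^ s * C t : ℝ) : ℂ) *
              Complex.exp (-(t * l) * Complex.I)))‖ ≤ ε * β n ^ s := by
  intro ε hε
  obtain ⟨M, hM⟩ := hK_bdd
  obtain ⟨B, hB⟩ := exists_abs_charRemainder_le hM hs.le hk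
  filter_upwards [(tendsto_integral_abs_charRemainder_mul hK_cont.measurable hB hk hCs_int
    (fun n => (hβ_pos n).ne') hβ0).eventually_lt_const hε] with n hn l
  calc _ ≤ β n ^ s * ∫ t, |charRemainder K s ks (β n * t)| * |(|t| ^ s * C t)| :=
        norm_fourier_kernel_sub_one_add_le hK_cont hM hC_int hCs_int (hβ_pos n) l
    _ ≤ ε * β n ^ s := by
        rw [mul_comm ε]
        exact mul_le_mul_of_nonneg_left hn.le (rpow_pos_of_pos (hβ_pos n) s).le

theorem stmt_11 (K : ℝ → ℝ) (hK_cont : Continuous K) (hK_even : ∀ x, K (-x) = K x)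
    (hK0 : K 0 = 1) (hK_bdd : ∃ M : ℝ, ∀ x, |K x| ≤ M)
    (s ks : ℝ) (hs : 0 < s) (hks : ks ≠ 0)
    (hk : Tendsto (fun x : ℝ => (1 - K x) / |x| ^ s) (nhdsWithin 0 {0}ᶜ) (nhds ks))
    (C : ℝ → ℝ) (hC_cont : Continuous C) (hC_int : Integrable C)
    (hCs_int : Integrable (fun t : ℝ => |t| ^ s * C t))
    (hg_int : Integrable (fun t : ℝ => ⨆ u ∈ {u : ℝ | |t| ≤ |u|}, |u| ^ s * |C u|))
    (β : ℕ → ℝ) (hβ_pos : ∀ n, 0 < β n) (hβ0 : Tendsto β atTop (nhds 0)) :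
    ∀ ε > (0 : ℝ), ∀ᶠ n : ℕ in atTop, ∀ l : ℝ,
      ‖((1 / (2 * π)) * (∫ t : ℝ, ((K (β n * t) - 1 : ℝ) : ℂ) * (C t : ℂ) *
            Complex.exp (-(t * l) * Complex.I)) +
          (ks : ℂ) * (β n ^ s : ℝ) *
            ((1 / (2 * π)) * ∫ t : ℝ, ((|t| ^ s * C t : ℝ) : ℂ) *
              Complex.exp (-(t * l) * Complex.I)))‖ ≤ ε * β n ^ s :=
  stmt_11_general K hK_cont hK_bdd s ks hs hk C hC_int hCs_int β hβ_pos hβ0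
end

section
/- Let φ : ℝ → ℂ be integrable with lim_{λ→∞} |λ|^p |φ(λ)| = A for some p > 1 and A ≥ 0. Then the aliasing error satisfies ∑_{l ∈ ℤ, l ≠ 0} |φ(λ + 2π ρ_n l)| = (A/(2π)^p) (∑_{|l|>0} 1/|l|^p) ρ_n^{-p} + o(ρ_n^{-p}) as ρ_n → ∞, for each fixed λ. -/
/-!
Write `ψ = ‖φ‖` and `x = λ + 2πρl`. For fixed `l ≠ 0`, `x/ρ → 2πl`, so
`ρ^p ψ(x) = |x|^p ψ(x) / |x/ρ|^p → A / |2πl|^p`. Once `πρ ≥ |λ|` we have `|x| ≥ πρ|l|`, so the tail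
bound `|x|^p ψ(x) ≤ A + 1` gives `ρ^p ψ(x) ≤ (A + 1) π^{-p} |l|^{-p}`, which is summable over `l`
since `p > 1`; dominated convergence for series then passes the limit through the sum.
-/

open Filter MeasureTheory Topology Real

lemma cocompact_real_eq_comap_abs : cocompact ℝ = comap (fun x : ℝ => |x|) atTop := by
  rw [cocompact_eq_atBot_atTop, comap_abs_atTop]

lemma tendsto_const_add_mul_cocompact {α : Type*} {L : Filter α} {ρ : α → ℝ}
    (hρ : Tendsto ρ L atTop) (a : ℝ) {c : ℝ} (hc : c ≠ 0) :
    Tendsto (fun t => a + c * ρ t) L (cocompact ℝ) :=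
  ((Homeomorph.addLeft a).isClosedEmbedding.tendsto_cocompact.comp
    (tendsto_cocompact_mul_left₀ hc)).comp (hρ.mono_right atTop_le_cocompact)

lemma mul_abs_intCast_le_abs_add_two_mul {a r : ℝ} (har : |a| ≤ r) {l : ℤ} (hl : l ≠ 0) :
    r * |(l : ℝ)| ≤ |a + 2 * r * l| := by
  have hl1 : (1 : ℝ) ≤ |(l : ℝ)| := by exact_mod_cast Int.one_le_abs hl
  have hr : 0 ≤ r := (abs_nonneg a).trans har
  have h2rl : |2 * r * l| = 2 * r * |(l : ℝ)| := by
    rw [abs_mul, abs_of_nonneg (by positivity : 0 ≤ 2 * r)]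
  have htri : |2 * r * l| ≤ |a + 2 * r * l| + |a| := by simpa using abs_sub (a + 2 * r * l) a
  nlinarith

lemma tendsto_rpow_mul_comp_const_add_mul {α : Type*} {L : Filter α} {ψ : ℝ → ℝ} {p A : ℝ}
    (htail : Tendsto (fun x => |x| ^ p * ψ x) (cocompact ℝ) (𝓝 A)) {ρ : α → ℝ}
    (hρ : Tendsto ρ L atTop) (a : ℝ) {c : ℝ} (hc : c ≠ 0) :
    Tendsto (fun t => ρ t ^ p * ψ (a + c * ρ t)) L (𝓝 (A / |c| ^ p)) := by
  have hx := tendsto_const_add_mul_cocompact hρ a hc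
  have hratio : Tendsto (fun t => |(a + c * ρ t) / ρ t|) L (𝓝 |c|) := by
    have : Tendsto (fun t => a * (ρ t)⁻¹ + c) L (𝓝 (a * 0 + c)) :=
      ((tendsto_inv_atTop_zero.comp hρ).const_mul a).add_const c
    rw [mul_zero, zero_add] at this
    refine this.abs.congr' ?_
    filter_upwards [hρ.eventually_gt_atTop 0] with t ht
    field_simp
  refine ((htail.comp hx).div (hratio.rpow_const (.inl (abs_pos.2 hc).ne'))
    (by positivity)).congr' ?_
  filter_upwards [hρ.eventually_gt_atTop 0,
    hx.eventually (isCompact_singleton (x := 0)).compl_mem_cocompact] with t hρt hxt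
  have : |a + c * ρ t| ^ p ≠ 0 := (rpow_pos_of_pos (abs_pos.2 hxt) p).ne'
  simp only [Pi.div_apply, Function.comp_apply, abs_div, abs_of_pos hρt,
    div_rpow (abs_nonneg _) hρt.le]
  field_simp

lemma rpow_mul_comp_add_two_mul_le {ψ : ℝ → ℝ} (hψ : ∀ x, 0 ≤ ψ x) {p C R : ℝ} (hp : 0 ≤ p)
    (hC : ∀ x, R ≤ |x| → |x| ^ p * ψ x ≤ C) {a r : ℝ} (har : |a| ≤ r) (hRr : R ≤ r)
    {l : ℤ} (hl : l ≠ 0) :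
    r ^ p * ψ (a + 2 * r * l) ≤ C * |(l : ℝ)| ^ (-p) := by
  have hl1 : (1 : ℝ) ≤ |(l : ℝ)| := by exact_mod_cast Int.one_le_abs hl
  have hr : 0 ≤ r := (abs_nonneg a).trans har
  have hx := mul_abs_intCast_le_abs_add_two_mul har hl
  rw [rpow_neg (by positivity), ← div_eq_mul_inv, le_div_iff₀ (by positivity), mul_right_comm,
    ← mul_rpow hr (by positivity)]
  calc (r * |(l : ℝ)|) ^ p * ψ (a + 2 * r * l) ≤ |a + 2 * r * l| ^ p * ψ (a + 2 * r * l) :=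
        mul_le_mul_of_nonneg_right (rpow_le_rpow (by positivity) hx hp) (hψ _)
    _ ≤ C := hC _ (hRr.trans ((le_mul_of_one_le_right hr hl1).trans hx))

lemma exists_forall_abs_ge_le_of_tendsto_cocompact {f : ℝ → ℝ} {A B : ℝ}
    (hf : Tendsto f (cocompact ℝ) (𝓝 A)) (hAB : A < B) : ∃ R, ∀ x, R ≤ |x| → f x ≤ B := by
  have h := hf.eventually_le_const hAB
  rw [cocompact_real_eq_comap_abs, eventually_comap] at h
  obtain ⟨R, hR⟩ := h.exists_forall_of_atTop
  exact ⟨R, fun x hx => hR _ hx x rfl⟩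

theorem tendsto_tsum_rpow_mul_comp_add_two_pi_mul {α : Type*} {L : Filter α} {ψ : ℝ → ℝ}
    (hψ : ∀ x, 0 ≤ ψ x) {p A : ℝ} (hp : 1 < p)
    (htail : Tendsto (fun x => |x| ^ p * ψ x) (cocompact ℝ) (𝓝 A)) {ρ : α → ℝ}
    (hρ : Tendsto ρ L atTop) (a : ℝ) :
    Tendsto (fun t => ∑' l : ℤ, if l ≠ 0 then ρ t ^ p * ψ (a + 2 * π * ρ t * l) else 0) L
      (𝓝 (∑' l : ℤ, if l ≠ 0 then A / |2 * π * l| ^ p else 0)) := by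
  have hA : 0 ≤ A := ge_of_tendsto' htail fun x => mul_nonneg (by positivity) (hψ x)
  obtain ⟨R, hR⟩ := exists_forall_abs_ge_le_of_tendsto_cocompact htail (lt_add_one A)
  refine tendsto_tsum_of_dominated_convergence
    (bound := fun l : ℤ => (A + 1) / π ^ p * |(l : ℝ)| ^ (-p))
    ((summable_abs_int_rpow hp).mul_left _) (fun l => ?_) ?_
  · split_ifs with hl
    · convert tendsto_rpow_mul_comp_const_add_mul htail hρ a (c := 2 * π * l)
        (by simp_all [pi_ne_zero]) using 4
      ring
    · exact tendsto_const_nhds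
  · filter_upwards [(hρ.const_mul_atTop pi_pos).eventually_ge_atTop (max |a| R),
      hρ.eventually_ge_atTop 0] with t hπρ hρt l
    split_ifs with hl
    · have h := rpow_mul_comp_add_two_mul_le hψ (by linarith) hR (le_of_max_le_left hπρ)
        (le_of_max_le_right hπρ) hl
      rw [mul_rpow pi_pos.le hρt, ← mul_assoc] at h
      rw [norm_of_nonneg (mul_nonneg (rpow_nonneg hρt _) (hψ _)), div_mul_eq_mul_div,
        le_div_iff₀ (by positivity)]
      linarith
    · simp only [norm_zero]; positivity

theorem stmt_12_general (φ : ℝ → ℂ)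
    (p A : ℝ) (hp : 1 < p)
    (htail : Tendsto (fun l : ℝ => |l| ^ p * ‖φ l‖) (cocompact ℝ) (nhds A))
    (ρ : ℕ → ℝ) (hρ : Tendsto ρ atTop atTop) (lam : ℝ) :
    Tendsto
      (fun n : ℕ => ρ n ^ p *
        ∑' l : ℤ, if l ≠ 0 then ‖φ (lam + 2 * π * ρ n * l)‖ else 0)
      atTop
      (nhds ((A / (2 * π) ^ p) * ∑' l : ℤ, if l ≠ 0 then 1 / |(l : ℝ)| ^ p else 0)) := by
  convert tendsto_tsum_rpow_mul_comp_add_two_pi_mul (fun x => norm_nonneg (φ x)) hp htail hρ lam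
    using 2 with n
  · rw [← tsum_mul_left]
    congr with l
    split_ifs <;> simp
  · rw [← tsum_mul_left]
    congr with l
    split_ifs with hl
    · rw [abs_mul, abs_of_pos two_pi_pos, mul_rpow two_pi_pos.le (abs_nonneg _)]
      field_simp
    · simp

theorem stmt_12 (φ : ℝ → ℂ) (hφ_int : Integrable φ)
    (p A : ℝ) (hp : 1 < p) (hA : 0 ≤ A)
    (htail : Tendsto (fun l : ℝ => |l| ^ p * ‖φ l‖) (cocompact ℝ) (nhds A))
    (ρ : ℕ → ℝ) (hρ_pos : ∀ n, 0 < ρ n) (hρ : Tendsto ρ atTop atTop) (lam : ℝ) :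
    Tendsto
      (fun n : ℕ => ρ n ^ p *
        ∑' l : ℤ, if l ≠ 0 then ‖φ (lam + 2 * π * ρ n * l)‖ else 0)
      atTop
      (nhds ((A / (2 * π) ^ p) * ∑' l : ℤ, if l ≠ 0 then 1 / |(l : ℝ)| ^ p else 0)) :=
  stmt_12_general φ p A hp htail ρ hρ lam
end
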